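/- arXiv:2510.05628 — 2 statements merged into one kernel-verified Lean document; each statement's English description precedes it below -/
import Mathlib

section
/- Fix r ≥ 1, pairwise distinct points A₁,…,A_{t_r} of ℙ¹ with forms Hᵢ and pairwise distinct points B₁,…,B_{s_r} of ℙ¹ with forms Vⱼ, and two collections of integers 0 < t₁ < ⋯ < t_r, 0 < t′₁ < ⋯ < t′_{r−1} < t′_r = t_r and 0 < s₁ < ⋯ < s_r, 0 < s′₁ < ⋯ < s′_{r−1} < s′_r = s_r. Let I = Ideal.span of the staircase generators built from (tᵢ, sᵢ) and J = Ideal.span of the staircase generators built from (t′ᵢ, s′ᵢ) (both using the same forms Hᵢ, Vⱼ), with associated exponent sequences α and α′ respectively. Then I ⊓ J = ⋂_{i=1}^{t_r} ⋂_{j=1}^{max(αᵢ, α′ᵢ)} ⟨Hᵢ, Vⱼ⟩; in particular I ⊓ J is the defining ideal of an ACM set of points of ℙ¹×ℙ¹ (the Ferrers configuration with exponents max(αᵢ, α′ᵢ)). -/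
/- Common setup: R = ℂ[x₀,x₁,y₀,y₁] as MvPolynomial (Fin 4) ℂ with
   x₀ = X 0, x₁ = X 1, y₀ = X 2, y₁ = X 3.
   `Hf a` is the horizontal form a₁x₀ - a₀x₁ of the point a = [a₀:a₁] ∈ ℙ¹;
   `Vf b` is the vertical form b₁y₀ - b₀y₁;
   `cross a b ≠ 0` says the (nonzero) pairs a, b are non-proportional,
   i.e. define distinct points of ℙ¹. -/

open MvPolynomial

noncomputable section

abbrev R : Type := MvPolynomial (Fin 4) ℂ

def Hf (a : ℂ × ℂ) : R := C a.2 * X 0 - C a.1 * X 1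

def Vf (b : ℂ × ℂ) : R := C b.2 * X 2 - C b.1 * X 3

def cross (a b : ℂ × ℂ) : ℂ := a.1 * b.2 - a.2 * b.1

/-- The defining ideal of the point P = A×B of ℙ¹×ℙ¹. -/
def Ipt (P : (ℂ × ℂ) × (ℂ × ℂ)) : Ideal R := Ideal.span {Hf P.1, Vf P.2}

/-- The defining ideal of a finite set of points (I_∅ = R = ⊤). -/
def Ipts (X : Finset ((ℂ × ℂ) × (ℂ × ℂ))) : Ideal R := X.inf Ipt

/-- The defining ideal of a set of points (I_∅ = R = ⊤). -/
def IptsSet (W : Set ((ℂ × ℂ) × (ℂ × ℂ))) : Ideal R := ⨅ P ∈ W, Ipt P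

/-- Bihomogeneous: homogeneous separately in x₀,x₁ and in y₀,y₁. -/
def Bihom (f : R) : Prop :=
  ∃ a b : ℕ, IsWeightedHomogeneous (![1,1,0,0] : Fin 4 → ℕ) f a ∧
    IsWeightedHomogeneous (![0,0,1,1] : Fin 4 → ℕ) f b

/-- `G` minimally generates `I`. -/
def MinGen (G : Finset R) (I : Ideal R) : Prop :=
  Ideal.span (G : Set R) = I ∧ ∀ g ∈ G, Ideal.span ((G : Set R) \ {g}) ≠ I

/-- Staircase data: r ≥ 1, 0 = t₀ < t₁ < ⋯ < t_r, 0 = s₀ < s₁ < ⋯ < s_r,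
    pairwise distinct points A₁,…,A_{t_r} of ℙ¹ and pairwise distinct points
    B₁,…,B_{s_r} of ℙ¹ (all indexed starting at 1). -/
structure Staircase where
  r : ℕ
  t : ℕ → ℕ
  s : ℕ → ℕ
  A : ℕ → ℂ × ℂ
  B : ℕ → ℂ × ℂ
  hr : 1 ≤ r
  ht0 : t 0 = 0
  hs0 : s 0 = 0
  ht : ∀ k, k < r → t k < t (k + 1)
  hs : ∀ k, k < r → s k < s (k + 1)
  hA0 : ∀ i ∈ Finset.Icc 1 (t r), A i ≠ 0
  hB0 : ∀ j ∈ Finset.Icc 1 (s r), B j ≠ 0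
  hAd : ∀ i ∈ Finset.Icc 1 (t r), ∀ i' ∈ Finset.Icc 1 (t r), i ≠ i' → cross (A i) (A i') ≠ 0
  hBd : ∀ j ∈ Finset.Icc 1 (s r), ∀ j' ∈ Finset.Icc 1 (s r), j ≠ j' → cross (B j) (B j') ≠ 0

/-- The staircase generator f_k = H₁⋯H_{t_k} · V₁⋯V_{s_{r-k}}. -/
def stairGen (S : Staircase) (k : ℕ) : R :=
  (∏ i ∈ Finset.Icc 1 (S.t k), Hf (S.A i)) * ∏ j ∈ Finset.Icc 1 (S.s (S.r - k)), Vf (S.B j)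

/-! Each `⟨H_A, V_B⟩` is prime, being the kernel of the parametrisation
`(x₀, x₁, y₀, y₁) ↦ (a₀u, a₁u, b₀v, b₁v)` of the cone over `A × B`, and it contains no other
`H_{A'}` or `V_{B'}`. Hence a single column satisfies `⋂ⱼ ⟨H, Vⱼ⟩ = ⟨H, V₁⋯V_m⟩`, and a staircase
ideal is the ideal of its Ferrers diagram: writing `f` in the intersection as
`u H₁ + v V₁⋯V_{α₁}` from the first column, the second term is a generator multiple, while
`u H₁` lies in the primes of the other columns, which miss `H₁`, so `u` lies in the ideal of the
staircase with the first column deleted and induction applies. Two Ferrers ideals on the same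
points then intersect column by column, the union of two columns being the longer one. -/

namespace Ideal

variable {A : Type*} [CommRing A]

theorem span_pair_inf_span_pair_eq_span_pair_mul {x y z : A} (hp : (span {x, y}).IsPrime)
    (hz : z ∉ span {x, y}) : span {x, y} ⊓ span {x, z} = span {x, y * z} := by
  apply le_antisymm
  · rintro f ⟨hfy, hfz⟩
    obtain ⟨u, v, rfl⟩ := mem_span_pair.mp hfz
    have hvz : v * z ∈ span {x, y} := by
      simpa using sub_mem hfy (mul_mem_left _ u (subset_span (Set.mem_insert x _)))
    obtain ⟨c, d, rfl⟩ := mem_span_pair.mp ((hp.mem_or_mem hvz).resolve_right hz)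
    exact mem_span_pair.mpr ⟨u + c * z, d, by ring⟩
  · rw [span_le]
    rintro g (rfl | rfl)
    · exact ⟨subset_span (Set.mem_insert _ _), subset_span (Set.mem_insert _ _)⟩
    · exact ⟨mem_span_pair.mpr ⟨0, z, by ring⟩, mem_span_pair.mpr ⟨0, y, by ring⟩⟩

theorem iInf_span_pair_eq_span_pair_prod {ι : Type*} [DecidableEq ι] (s : Finset ι) (x : A)
    (y : ι → A) (hp : ∀ j ∈ s, (span {x, y j}).IsPrime)
    (hy : ∀ j ∈ s, ∀ j' ∈ s, j ≠ j' → y j' ∉ span {x, y j}) :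
    ⨅ j ∈ s, span {x, y j} = span {x, ∏ j ∈ s, y j} := by
  induction s using Finset.induction_on with
  | empty => simpa [eq_comm, eq_top_iff_one, mem_span_pair] using ⟨0, 1, by ring⟩
  | insert a s has ih =>
    have hpa := hp a (s.mem_insert_self a)
    have hprod : ∏ j ∈ s, y j ∉ span {x, y a} := by
      rw [hpa.prod_mem_iff]
      rintro ⟨j, hj, hmem⟩
      exact hy a (s.mem_insert_self a) j (Finset.mem_insert_of_mem hj)
        (by rintro rfl; exact has hj) hmem
    rw [Finset.iInf_insert, Finset.prod_insert has,
      ih (fun j hj ↦ hp j (Finset.mem_insert_of_mem hj))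
        (fun j hj j' hj' ↦ hy j (Finset.mem_insert_of_mem hj) j' (Finset.mem_insert_of_mem hj')),
      span_pair_inf_span_pair_eq_span_pair_mul hpa hprod]

end Ideal

theorem Finset.prod_Icc_one_eq_prod_range {M : Type*} [CommMonoid M] (n : ℕ) (f : ℕ → M) :
    ∏ i ∈ Finset.Icc 1 n, f i = ∏ i ∈ Finset.range n, f (i + 1) := by
  rw [Finset.range_eq_Ico, Finset.prod_Ico_add', zero_add, Finset.Ico_add_one_right_eq_Icc]

theorem iInf_range_add_one_eq_iInf_Icc {L : Type*} [CompleteLattice L] (n : ℕ) (f : ℕ → L) :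
    ⨅ i ∈ Finset.range n, f (i + 1) = ⨅ i ∈ Finset.Icc 1 n, f i := by
  refine le_antisymm (le_iInf₂ fun i hi ↦ ?_) (le_iInf₂ fun i hi ↦ ?_)
  · obtain ⟨hi1, hin⟩ := Finset.mem_Icc.1 hi
    obtain ⟨k, rfl⟩ := Nat.exists_eq_add_of_le' hi1
    exact iInf₂_le k (Finset.mem_range.2 hin)
  · exact iInf₂_le (i + 1) (Finset.mem_Icc.2 ⟨by omega, Finset.mem_range.1 hi⟩)

theorem biInf_Icc_one_inf_biInf_Icc_one {L : Type*} [CompleteLattice L] (f : ℕ → L) (p q : ℕ) :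
    (⨅ j ∈ Finset.Icc 1 p, f j) ⊓ ⨅ j ∈ Finset.Icc 1 q, f j =
      ⨅ j ∈ Finset.Icc 1 (max p q), f j := by
  rcases le_total p q with h | h
  · rw [max_eq_right h]
    exact inf_eq_right.2 (biInf_mono fun j hj ↦ Finset.Icc_subset_Icc_right h hj)
  · rw [max_eq_left h]
    exact inf_eq_left.2 (biInf_mono fun j hj ↦ Finset.Icc_subset_Icc_right h hj)

section StaircaseIdeal

open Ideal Finset

variable {A : Type*} [CommRing A]

/-- One generator for every column `c`, not only for the corners of the staircase: the corners
generate the same ideal, and this form is stable under deleting the first column. -/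
def staircaseGen (x y : ℕ → A) (e : ℕ → ℕ) (c : ℕ) : A :=
  (∏ i ∈ range c, x i) * ∏ j ∈ range (e c), y j

theorem staircaseGen_succ (x y : ℕ → A) (e : ℕ → ℕ) (c : ℕ) :
    staircaseGen x y e (c + 1) =
      staircaseGen (fun i ↦ x (i + 1)) y (fun c ↦ e (c + 1)) c * x 0 := by
  simp only [staircaseGen, prod_range_succ']
  ring

theorem staircaseGen_dvd_staircaseGen (x y : ℕ → A) {e : ℕ → ℕ} {c c' : ℕ} (hc : c ≤ c')
    (he : e c ≤ e c') : staircaseGen x y e c ∣ staircaseGen x y e c' :=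
  mul_dvd_mul (prod_dvd_prod_of_subset _ _ _ (range_subset_range.2 hc))
    (prod_dvd_prod_of_subset _ _ _ (range_subset_range.2 he))

theorem span_staircaseGen_le_iInf (x y : ℕ → A) {e : ℕ → ℕ} (he : Antitone e) (n : ℕ) :
    span (staircaseGen x y e '' Set.Iic n) ≤
      ⨅ i ∈ range n, ⨅ j ∈ range (e i), span {x i, y j} := by
  rw [span_le]
  rintro _ ⟨c, -, rfl⟩
  simp only [SetLike.mem_coe, Submodule.mem_iInf, mem_range]
  intro i _ j hj
  rcases lt_or_ge i c with hic | hci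
  · exact mem_of_dvd _ (dvd_mul_of_dvd_left (dvd_prod_of_mem _ (mem_range.2 hic)) _)
      (subset_span (Set.mem_insert _ _))
  · exact mem_of_dvd _
      (dvd_mul_of_dvd_right (dvd_prod_of_mem _ (mem_range.2 (hj.trans_le (he hci)))) _)
      (subset_span (Set.mem_insert_of_mem _ rfl))

theorem mul_mem_span_staircaseGen_succ (x y : ℕ → A) (e : ℕ → ℕ) {n : ℕ} {u : A}
    (hu : u ∈ span (staircaseGen (fun i ↦ x (i + 1)) y (fun c ↦ e (c + 1)) '' Set.Iic n)) :
    u * x 0 ∈ span (staircaseGen x y e '' Set.Iic (n + 1)) := by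
  refine Submodule.mem_comap.1 <|
    (span_le (I := Submodule.comap (LinearMap.mulRight A (x 0)) _)).2 ?_ hu
  rintro _ ⟨c, hc, rfl⟩
  exact subset_span ⟨c + 1, Nat.succ_le_succ hc, staircaseGen_succ x y e c⟩

theorem span_staircaseGen_eq_iInf (n : ℕ) (x y : ℕ → A) (e : ℕ → ℕ) (he : Antitone e)
    (hen : e n = 0) (hp : ∀ i < n, ∀ j < e 0, (span {x i, y j}).IsPrime)
    (hx : ∀ i < n, ∀ i' < n, i ≠ i' → ∀ j < e 0, x i' ∉ span {x i, y j})
    (hy : ∀ i < n, ∀ j < e 0, ∀ j' < e 0, j ≠ j' → y j' ∉ span {x i, y j}) :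
    span (staircaseGen x y e '' Set.Iic n) =
      ⨅ i ∈ range n, ⨅ j ∈ range (e i), span {x i, y j} := by
  induction n generalizing x e with
  | zero =>
    simp only [range_zero, notMem_empty, iInf_false, iInf_top, eq_top_iff_one]
    exact subset_span ⟨0, Set.mem_Iic.2 le_rfl, by simp [staircaseGen, hen]⟩
  | succ n ih =>
    refine le_antisymm (span_staircaseGen_le_iInf x y he _) fun f hf ↦ ?_
    simp only [Submodule.mem_iInf, mem_range] at hf
    have he0 (i : ℕ) : e i ≤ e 0 := he (Nat.zero_le i)
    have hcol : f ∈ span {x 0, ∏ j ∈ range (e 0), y j} := by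
      rw [← iInf_span_pair_eq_span_pair_prod _ _ _
        (fun j hj ↦ hp 0 n.succ_pos j (mem_range.1 hj))
        (fun j hj j' hj' ↦ hy 0 n.succ_pos j (mem_range.1 hj) j' (mem_range.1 hj'))]
      simpa only [Submodule.mem_iInf, mem_range] using hf 0 n.succ_pos
    obtain ⟨u, v, rfl⟩ := mem_span_pair.mp hcol
    have hu : u ∈ span (staircaseGen (fun i ↦ x (i + 1)) y (fun c ↦ e (c + 1)) '' Set.Iic n) := by
      rw [ih _ _ (fun a b hab ↦ he (Nat.succ_le_succ hab)) hen
        (fun i _ j hj ↦ hp (i + 1) (by omega) j (hj.trans_le (he0 1)))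
        (fun i _ i' _ _ j hj ↦ hx (i + 1) (by omega) (i' + 1) (by omega) (by omega) j
          (hj.trans_le (he0 1)))
        (fun i _ j hj j' hj' ↦ hy (i + 1) (by omega) j (hj.trans_le (he0 1)) j'
          (hj'.trans_le (he0 1)))]
      simp only [Submodule.mem_iInf, mem_range]
      intro i hi j hj
      have hv : v * ∏ j ∈ range (e 0), y j ∈ span {x (i + 1), y j} :=
        mul_mem_left _ _ (mem_of_dvd _ (dvd_prod_of_mem _ (mem_range.2 (hj.trans_le (he0 _))))
          (subset_span (Set.mem_insert_of_mem _ rfl)))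
      refine ((hp (i + 1) (by omega) j (hj.trans_le (he0 _))).mem_or_mem ?_).resolve_right
        (hx (i + 1) (by omega) 0 n.succ_pos (by omega) j (hj.trans_le (he0 _)))
      simpa using sub_mem (hf (i + 1) (by omega) j hj) hv
    exact add_mem (mul_mem_span_staircaseGen_succ x y e hu)
      (mul_mem_left _ _ (subset_span ⟨0, Nat.zero_le _, by simp [staircaseGen]⟩))

end StaircaseIdeal

def coneParam (a b : ℂ × ℂ) : R →ₐ[ℂ] MvPolynomial (Fin 2) ℂ :=
  aeval ![C a.1 * X 0, C a.2 * X 0, C b.1 * X 1, C b.2 * X 1]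

theorem coneParam_Hf (a b c : ℂ × ℂ) : coneParam a b (Hf c) = C (cross a c) * X 0 := by
  simp only [coneParam, Hf, cross, map_sub, map_mul, aeval_C, aeval_X, algebraMap_eq,
    Matrix.cons_val_zero, Matrix.cons_val_one]
  ring

theorem coneParam_Vf (a b d : ℂ × ℂ) : coneParam a b (Vf d) = C (cross b d) * X 1 := by
  simp only [coneParam, Vf, cross, map_sub, map_mul, aeval_C, aeval_X, algebraMap_eq,
    Matrix.cons_val]
  ring

theorem exists_cross_eq_one {a : ℂ × ℂ} (ha : a ≠ 0) : ∃ a' : ℂ × ℂ, cross a a' = 1 := by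
  rcases eq_or_ne a.1 0 with h1 | h1
  · have h2 : a.2 ≠ 0 := fun h2 ↦ ha (Prod.ext h1 h2)
    exact ⟨(-a.2⁻¹, 0), by simp [cross, h1, h2]⟩
  · exact ⟨(0, a.1⁻¹), by simp [cross, h1]⟩

theorem mem_span_Hf_Vf_iff {a b : ℂ × ℂ} (ha : a ≠ 0) (hb : b ≠ 0) {f : R} :
    f ∈ Ideal.span {Hf a, Vf b} ↔ coneParam a b f = 0 := by
  refine ⟨fun hf ↦ ?_, fun hf ↦ ?_⟩
  · refine (Ideal.span_le (I := RingHom.ker (coneParam a b)).mpr ?_) hf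
    rintro g (rfl | rfl) <;> simp [coneParam_Hf, coneParam_Vf, cross, mul_comm]
  obtain ⟨a', ha'⟩ := exists_cross_eq_one ha
  obtain ⟨b', hb'⟩ := exists_cross_eq_one hb
  -- `u ↦ Hf a'`, `v ↦ Vf b'` is a section of `coneParam a b` modulo `⟨Hf a, Vf b⟩`
  set π := Ideal.Quotient.mkₐ ℂ (Ideal.span {Hf a, Vf b})
  have hsection : (π.comp (aeval ![Hf a', Vf b'])).comp (coneParam a b) = π := by
    have hCa : (C (cross a a') : R) = 1 := by rw [ha', C_1]
    have hCb : (C (cross b b') : R) = 1 := by rw [hb', C_1]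
    simp only [cross, map_sub, map_mul] at hCa hCb
    refine MvPolynomial.algHom_ext fun i ↦ ?_
    simp only [AlgHom.comp_apply, π, Ideal.Quotient.mkₐ_eq_mk, Ideal.Quotient.eq,
      Ideal.mem_span_pair]
    fin_cases i <;>
      simp only [coneParam, Hf, Vf, map_mul, aeval_C, aeval_X, algebraMap_eq, Fin.isValue,
        Fin.reduceFinMk, Fin.zero_eta, Fin.mk_one, Matrix.cons_val]
    · exact ⟨C a'.1, 0, by linear_combination (-X 0 : R) * hCa⟩
    · exact ⟨C a'.2, 0, by linear_combination (-X 1 : R) * hCa⟩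
    · exact ⟨0, C b'.1, by linear_combination (-X 2 : R) * hCb⟩
    · exact ⟨0, C b'.2, by linear_combination (-X 3 : R) * hCb⟩
  have := AlgHom.congr_fun hsection f
  simp only [AlgHom.comp_apply, hf, map_zero] at this
  exact Ideal.Quotient.eq_zero_iff_mem.mp this.symm

theorem isPrime_span_Hf_Vf {a b : ℂ × ℂ} (ha : a ≠ 0) (hb : b ≠ 0) :
    (Ideal.span {Hf a, Vf b}).IsPrime := by
  have : Ideal.span {Hf a, Vf b} = RingHom.ker (coneParam a b) :=
    Ideal.ext fun _ ↦ mem_span_Hf_Vf_iff ha hb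
  exact this ▸ RingHom.ker_isPrime _

theorem Hf_notMem_span {a b c : ℂ × ℂ} (ha : a ≠ 0) (hb : b ≠ 0) (hc : cross a c ≠ 0) :
    Hf c ∉ Ideal.span {Hf a, Vf b} := by
  rw [mem_span_Hf_Vf_iff ha hb, coneParam_Hf]
  exact mul_ne_zero (C_ne_zero.mpr hc) (X_ne_zero _)

theorem Vf_notMem_span {a b d : ℂ × ℂ} (ha : a ≠ 0) (hb : b ≠ 0) (hd : cross b d ≠ 0) :
    Vf d ∉ Ideal.span {Hf a, Vf b} := by
  rw [mem_span_Hf_Vf_iff ha hb, coneParam_Vf]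
  exact mul_ne_zero (C_ne_zero.mpr hd) (X_ne_zero _)

namespace Staircase

variable (S : Staircase)

theorem t_strictMonoOn : StrictMonoOn S.t (Set.Iic S.r) := strictMonoOn_Iic_of_lt_succ S.ht

theorem s_strictMonoOn : StrictMonoOn S.s (Set.Iic S.r) := strictMonoOn_Iic_of_lt_succ S.hs

theorem exists_step {c : ℕ} (hc : c < S.t S.r) : ∃ k < S.r, S.t k ≤ c ∧ c < S.t (k + 1) := by
  have hex : ∃ m, c < S.t m := ⟨S.r, hc⟩
  have hpos : Nat.find hex ≠ 0 := fun h ↦ by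
    have := Nat.find_spec hex
    rw [h, S.ht0] at this
    omega
  refine ⟨Nat.find hex - 1, ?_, ?_, ?_⟩
  · have := Nat.find_min' hex hc
    omega
  · exact not_lt.1 (Nat.find_min hex (by omega))
  · simpa [Nat.sub_add_cancel (Nat.one_le_iff_ne_zero.2 hpos)] using Nat.find_spec hex

/-- Columns are indexed from `0` here: column `c` has height `α (c + 1)`, and height `0` from
column `t_r` on. -/
def colHeight (α : ℕ → ℕ) (c : ℕ) : ℕ := if c < S.t S.r then α (c + 1) else 0

def IsColumnHeights (α : ℕ → ℕ) : Prop :=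
  ∀ k, k < S.r → ∀ i, S.t k < i → i ≤ S.t (k + 1) → α i = S.s (S.r - k)

variable {S} {α : ℕ → ℕ}

theorem colHeight_eq_of_step (hα : S.IsColumnHeights α) {k c : ℕ} (hk : k < S.r)
    (hkc : S.t k ≤ c) (hck : c < S.t (k + 1)) :
    S.colHeight α c = S.s (S.r - k) := by
  have : S.t (k + 1) ≤ S.t S.r :=
    S.t_strictMonoOn.monotoneOn (Set.mem_Iic.2 hk) (Set.mem_Iic.2 le_rfl) hk
  rw [colHeight, if_pos (by omega), hα k hk (c + 1) (by omega) hck]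

theorem exists_colHeight_eq (hα : S.IsColumnHeights α) {c : ℕ} (hc : c ≤ S.t S.r) :
    ∃ k ≤ S.r, S.t k ≤ c ∧ S.colHeight α c = S.s (S.r - k) := by
  rcases hc.lt_or_eq with hc | rfl
  · obtain ⟨k, hk, hkc, hck⟩ := S.exists_step hc
    exact ⟨k, hk.le, hkc, colHeight_eq_of_step hα hk hkc hck⟩
  · exact ⟨S.r, le_rfl, le_rfl, by simp [colHeight, S.hs0]⟩

theorem colHeight_antitone (hα : S.IsColumnHeights α) : Antitone (S.colHeight α) := by
  intro c d hcd
  by_cases hd : d < S.t S.r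
  · obtain ⟨k, hk, hkc, hck⟩ := S.exists_step (hcd.trans_lt hd)
    obtain ⟨k', hk', hkd, hdk⟩ := S.exists_step hd
    have hkk' : k ≤ k' := by
      by_contra! h
      have := S.t_strictMonoOn.monotoneOn (Set.mem_Iic.2 (show k' + 1 ≤ S.r by omega))
        (Set.mem_Iic.2 hk.le) (show k' + 1 ≤ k by omega)
      omega
    rw [colHeight_eq_of_step hα hk hkc hck, colHeight_eq_of_step hα hk' hkd hdk]
    exact S.s_strictMonoOn.monotoneOn (Set.mem_Iic.2 (by omega)) (Set.mem_Iic.2 (by omega))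
      (by omega)
  · simp [colHeight, hd]

theorem colHeight_le (hα : S.IsColumnHeights α) (c : ℕ) : S.colHeight α c ≤ S.s S.r := by
  by_cases hc : c < S.t S.r
  · obtain ⟨k, hk, -, hck⟩ := exists_colHeight_eq hα hc.le
    rw [hck]
    exact S.s_strictMonoOn.monotoneOn (Set.mem_Iic.2 (by omega)) (Set.mem_Iic.2 le_rfl) (by omega)
  · simp [colHeight, hc]

theorem colHeight_t (hα : S.IsColumnHeights α) {k : ℕ} (hk : k ≤ S.r) :
    S.colHeight α (S.t k) = S.s (S.r - k) := by
  rcases hk.lt_or_eq with hk | rfl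
  · exact colHeight_eq_of_step hα hk le_rfl (S.ht k hk)
  · simp [colHeight, S.hs0]

theorem stairGen_eq_staircaseGen (hα : S.IsColumnHeights α) {k : ℕ} (hk : k ≤ S.r) :
    stairGen S k = staircaseGen (fun i ↦ Hf (S.A (i + 1))) (fun j ↦ Vf (S.B (j + 1)))
      (S.colHeight α) (S.t k) := by
  rw [stairGen, staircaseGen, colHeight_t hα hk, Finset.prod_Icc_one_eq_prod_range,
    Finset.prod_Icc_one_eq_prod_range]

theorem span_stairGen_eq_span_staircaseGen (hα : S.IsColumnHeights α) :
    Ideal.span (stairGen S '' Set.Iic S.r) =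
      Ideal.span (staircaseGen (fun i ↦ Hf (S.A (i + 1))) (fun j ↦ Vf (S.B (j + 1)))
        (S.colHeight α) '' Set.Iic (S.t S.r)) := by
  refine le_antisymm (Ideal.span_le.2 ?_) (Ideal.span_le.2 ?_)
  · rintro _ ⟨k, hk, rfl⟩
    rw [stairGen_eq_staircaseGen hα hk]
    exact Ideal.subset_span
      ⟨S.t k, S.t_strictMonoOn.monotoneOn hk (Set.mem_Iic.2 le_rfl) hk, rfl⟩
  · rintro _ ⟨c, hc, rfl⟩
    obtain ⟨k, hk, hkc, hck⟩ := exists_colHeight_eq hα hc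
    refine Ideal.mem_of_dvd _ ?_ (Ideal.subset_span ⟨k, hk, rfl⟩)
    rw [stairGen_eq_staircaseGen hα hk]
    exact staircaseGen_dvd_staircaseGen _ _ hkc ((colHeight_t hα hk).trans hck.symm).le

theorem span_stairGen_eq_iInf (hα : S.IsColumnHeights α) :
    Ideal.span (stairGen S '' Set.Iic S.r) =
      ⨅ i ∈ Finset.Icc 1 (S.t S.r), ⨅ j ∈ Finset.Icc 1 (α i), Ipt (S.A i, S.B j) := by
  have hi {i : ℕ} (hi : i < S.t S.r) : i + 1 ∈ Finset.Icc 1 (S.t S.r) :=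
    Finset.mem_Icc.2 ⟨by omega, hi⟩
  have hj {j : ℕ} (hj : j < S.colHeight α 0) : j + 1 ∈ Finset.Icc 1 (S.s S.r) :=
    Finset.mem_Icc.2 ⟨by omega, hj.trans_le (colHeight_le hα 0)⟩
  rw [span_stairGen_eq_span_staircaseGen hα,
    span_staircaseGen_eq_iInf _ _ _ _ (colHeight_antitone hα) (by simp [colHeight])
      (fun i hi' j hj' ↦ isPrime_span_Hf_Vf (S.hA0 _ (hi hi')) (S.hB0 _ (hj hj')))
      (fun i hi' i' hi'' hne j hj' ↦ Hf_notMem_span (S.hA0 _ (hi hi')) (S.hB0 _ (hj hj'))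
        (S.hAd _ (hi hi') _ (hi hi'') (by omega)))
      (fun i hi' j hj' j' hj'' hne ↦ Vf_notMem_span (S.hA0 _ (hi hi')) (S.hB0 _ (hj hj'))
        (S.hBd _ (hj hj') _ (hj hj'') (by omega))),
    ← iInf_range_add_one_eq_iInf_Icc]
  refine biInf_congr fun i hi' ↦ ?_
  rw [colHeight, if_pos (Finset.mem_range.1 hi'), ← iInf_range_add_one_eq_iInf_Icc]
  rfl

end Staircase

theorem statement4_general (S S' : Staircase)
    (hAA : S.A = S'.A) (hBB : S.B = S'.B)
    (htr : S.t S.r = S'.t S'.r)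
    (α α' : ℕ → ℕ)
    (hα : ∀ k, k < S.r → ∀ i, S.t k < i → i ≤ S.t (k + 1) → α i = S.s (S.r - k))
    (hα' : ∀ k, k < S'.r → ∀ i, S'.t k < i → i ≤ S'.t (k + 1) → α' i = S'.s (S'.r - k)) :
    Ideal.span (stairGen S '' Set.Iic S.r) ⊓ Ideal.span (stairGen S' '' Set.Iic S'.r) =
      ⨅ i ∈ Finset.Icc 1 (S.t S.r), ⨅ j ∈ Finset.Icc 1 (max (α i) (α' i)),
        Ipt (S.A i, S.B j) := by
  rw [Staircase.span_stairGen_eq_iInf hα, Staircase.span_stairGen_eq_iInf hα', ← htr, ← hAA,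
    ← hBB, ← iInf_inf_eq]
  refine iInf_congr fun i ↦ ?_
  rw [← iInf_inf_eq, biInf_Icc_one_inf_biInf_Icc_one]

/-- Lemma 2.12: two staircase ideals built from the same points and lines (with the
same r, the same t_r and the same s_r) intersect in the defining ideal of the Ferrers
configuration with exponents max(αᵢ, α′ᵢ), an ACM set of points. -/
theorem statement4 (S S' : Staircase)
    (hrr : S.r = S'.r) (hAA : S.A = S'.A) (hBB : S.B = S'.B)
    (htr : S.t S.r = S'.t S'.r) (hsr : S.s S.r = S'.s S'.r)
    (α α' : ℕ → ℕ)
    (hα : ∀ k, k < S.r → ∀ i, S.t k < i → i ≤ S.t (k + 1) → α i = S.s (S.r - k))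
    (hα' : ∀ k, k < S'.r → ∀ i, S'.t k < i → i ≤ S'.t (k + 1) → α' i = S'.s (S'.r - k)) :
    Ideal.span (stairGen S '' Set.Iic S.r) ⊓ Ideal.span (stairGen S' '' Set.Iic S'.r) =
      ⨅ i ∈ Finset.Icc 1 (S.t S.r), ⨅ j ∈ Finset.Icc 1 (max (α i) (α' i)),
        Ipt (S.A i, S.B j) :=
  statement4_general S S' hAA hBB htr α α' hα hα'
end
end

section
/- Given staircase data, let S be any subset of the middle staircase generators {f₁,…,f_{r−1}}, say S = {f_{k₁},…,f_{k_m}} with 0 < k₁ < ⋯ < k_m < r, and set A = {f₀, f_r} ∪ S. Then Ideal.span A is the defining ideal of an ACM set of points of ℙ¹×ℙ¹; explicitly Ideal.span A = I_Y where Y = {Aᵢ×Bⱼ : 1 ≤ i ≤ t_r, 1 ≤ j ≤ α′ᵢ} with α′ᵢ = s_r for 0 < i ≤ t_{k₁}, α′ᵢ = s_{r−k_l} for t_{k_l} < i ≤ t_{k_{l+1}} (1 ≤ l ≤ m−1), and α′ᵢ = s_{r−k_m} for t_{k_m} < i ≤ t_r (when S = ∅, Y is the full grid {Aᵢ×Bⱼ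 : 1 ≤ i ≤ t_r, 1 ≤ j ≤ s_r}). -/
/-!
Write `g₀, …, g_{m+1}` for the chosen generators `f_{k_l}`. Splitting off the first block of
rows, `g₀ = V₁⋯V_{s_r}` and `g_l = P·g'_l` for `l ≥ 1`, where `P = H₁⋯H_{t_{k₁}}` and the `g'_l`
generate, by induction, the ideal `J` of the Ferrers configuration on the remaining rows. Since
`g'₀ ∣ g₀` and `P` is a nonzerodivisor modulo `J` (point ideals are prime and no factor of `P`
vanishes at a point of `J`), `(g₀) + P·J = (P, g₀) ∩ J`; the same splitting, applied one linear
factor at a time, shows that `(P, g₀)` is the ideal of the grid of the first block.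
-/

/- Common setup: R = ℂ[x₀,x₁,y₀,y₁] as MvPolynomial (Fin 4) ℂ with
   x₀ = X 0, x₁ = X 1, y₀ = X 2, y₁ = X 3.
   `Hf a` is the horizontal form a₁x₀ - a₀x₁ of the point a = [a₀:a₁] ∈ ℙ¹;
   `Vf b` is the vertical form b₁y₀ - b₀y₁;
   `cross a b ≠ 0` says the (nonzero) pairs a, b are non-proportional,
   i.e. define distinct points of ℙ¹. -/

open MvPolynomial

noncomputable section

/-- Restriction to the cone `(x₀, x₁, y₀, y₁) = (a₀u, a₁u, b₀v, b₁v)` over the point `[a] × [b]`. -/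
def evalPt (a b : ℂ × ℂ) : R →ₐ[ℂ] MvPolynomial (Fin 2) ℂ :=
  aeval ![C a.1 * X 0, C a.2 * X 0, C b.1 * X 1, C b.2 * X 1]

theorem evalPt_Hf (a b a' : ℂ × ℂ) : evalPt a b (Hf a') = C (cross a a') * X 0 := by
  simp only [evalPt, Hf, cross, map_sub, map_mul, aeval_C, aeval_X, algebraMap_eq,
    Matrix.cons_val]
  ring

theorem evalPt_Vf (a b b' : ℂ × ℂ) : evalPt a b (Vf b') = C (cross b b') * X 1 := by
  simp only [evalPt, Vf, cross, map_sub, map_mul, aeval_C, aeval_X, algebraMap_eq,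
    Matrix.cons_val]
  ring

theorem Ipt_le_ker_evalPt (a b : ℂ × ℂ) : Ipt (a, b) ≤ RingHom.ker (evalPt a b) := by
  rw [Ipt, Ideal.span_le]
  rintro f (rfl | rfl) <;> simp [evalPt_Hf, evalPt_Vf, cross, mul_comm]

theorem Hf_notMem_Ipt {a a' : ℂ × ℂ} (b : ℂ × ℂ) (h : cross a a' ≠ 0) : Hf a' ∉ Ipt (a, b) :=
  fun hmem => by simpa [evalPt_Hf, h] using Ipt_le_ker_evalPt a b hmem

theorem Vf_notMem_Ipt (a : ℂ × ℂ) {b b' : ℂ × ℂ} (h : cross b b' ≠ 0) : Vf b' ∉ Ipt (a, b) :=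
  fun hmem => by simpa [evalPt_Vf, h] using Ipt_le_ker_evalPt a b hmem

theorem exists_dotProduct_eq_one {a : ℂ × ℂ} (ha : a ≠ 0) :
    ∃ z : ℂ × ℂ, z.1 * a.1 + z.2 * a.2 = 1 := by
  by_cases h1 : a.1 = 0
  · have h2 : a.2 ≠ 0 := fun h2 => ha (Prod.ext h1 h2)
    exact ⟨(0, a.2⁻¹), by simp [h2]⟩
  · exact ⟨(a.1⁻¹, 0), by simp [h1]⟩

theorem ker_evalPt_le_Ipt {a b : ℂ × ℂ} (ha : a ≠ 0) (hb : b ≠ 0) :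
    RingHom.ker (evalPt a b) ≤ Ipt (a, b) := by
  obtain ⟨z, hz⟩ := exists_dotProduct_eq_one ha
  obtain ⟨w, hw⟩ := exists_dotProduct_eq_one hb
  set I := Ipt (a, b)
  set q := algebraMap ℂ (R ⧸ I)
  have hC (c : ℂ) : Ideal.Quotient.mk I (C c) = q c := Ideal.Quotient.mk_algebraMap ..
  have hH : Ideal.Quotient.mk I (Hf a) = 0 :=
    Ideal.Quotient.eq_zero_iff_mem.2 (Ideal.subset_span (by simp))
  have hV : Ideal.Quotient.mk I (Vf b) = 0 :=
    Ideal.Quotient.eq_zero_iff_mem.2 (Ideal.subset_span (by simp))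
  have hz' := congr(q $hz)
  have hw' := congr(q $hw)
  simp only [Hf, Vf, map_sub, map_mul, map_add, map_one, hC] at hH hV hz' hw'
  -- a left inverse of `evalPt a b` modulo `I`: since `z ⬝ a = 1`, `x = a u` holds modulo `Hf a`
  -- for `u = z₀x₀ + z₁x₁`, and likewise for `y` and `v`
  let ψ : MvPolynomial (Fin 2) ℂ →ₐ[ℂ] R ⧸ I :=
    aeval ![Ideal.Quotient.mk I (C z.1 * X 0 + C z.2 * X 1),
      Ideal.Quotient.mk I (C w.1 * X 2 + C w.2 * X 3)]
  have hψ : ψ.comp (evalPt a b) = Ideal.Quotient.mkₐ ℂ I := by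
    ext i
    fin_cases i <;>
      simp only [ψ, evalPt, AlgHom.coe_comp, Function.comp_apply, aeval_X, map_mul, map_add,
        algHom_C, hC, Ideal.Quotient.mkₐ_eq_mk, Fin.zero_eta, Fin.mk_one, Fin.reduceFinMk,
        Matrix.cons_val]
    · linear_combination (-q z.2) * hH + Ideal.Quotient.mk I (X 0) * hz'
    · linear_combination q z.1 * hH + Ideal.Quotient.mk I (X 1) * hz'
    · linear_combination (-q w.2) * hV + Ideal.Quotient.mk I (X 2) * hw'
    · linear_combination q w.1 * hV + Ideal.Quotient.mk I (X 3) * hw'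
  intro f hf
  rw [RingHom.mem_ker] at hf
  exact Ideal.Quotient.eq_zero_iff_mem.1 (by simpa [hf] using (congr($hψ f)).symm)

theorem Ipt_eq_ker_evalPt {a b : ℂ × ℂ} (ha : a ≠ 0) (hb : b ≠ 0) :
    Ipt (a, b) = RingHom.ker (evalPt a b) :=
  le_antisymm (Ipt_le_ker_evalPt a b) (ker_evalPt_le_Ipt ha hb)

theorem Ipt_isPrime {a b : ℂ × ℂ} (ha : a ≠ 0) (hb : b ≠ 0) : (Ipt (a, b)).IsPrime :=
  Ipt_eq_ker_evalPt ha hb ▸ RingHom.ker_isPrime _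

section Splitting

variable {α : Type*} [CommRing α]

theorem Ideal.IsPrime.mem_of_prod_mul_mem {ι : Type*} {J : Ideal α} (hJ : J.IsPrime)
    {s : Finset ι} {g : ι → α} (hg : ∀ i ∈ s, g i ∉ J) {f : α} (h : (∏ i ∈ s, g i) * f ∈ J) :
    f ∈ J :=
  (hJ.mem_or_mem h).resolve_left fun hp => by
    obtain ⟨i, hi, hgi⟩ := hJ.prod_mem_iff.1 hp
    exact hg i hi hgi

theorem span_singleton_sup_mul_eq_inf {P Q : α} {J : Ideal α} (hQ : Q ∈ J)
    (hP : ∀ f, P * f ∈ J → f ∈ J) :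
    Ideal.span {Q} ⊔ Ideal.span {P} * J = Ideal.span {P, Q} ⊓ J := by
  refine le_antisymm (sup_le (le_inf ?_ ?_) (le_inf ?_ Ideal.mul_le_right)) ?_
  · exact Ideal.span_mono (by simp)
  · exact (Ideal.span_singleton_le_iff_mem J).2 hQ
  · exact Ideal.mul_le_left.trans (Ideal.span_mono (by simp))
  rintro x ⟨hxPQ, hxJ⟩
  obtain ⟨u, v, rfl⟩ := Ideal.mem_span_pair.1 hxPQ
  have hu : u ∈ J := hP u <| by
    rw [mul_comm, ← add_sub_cancel_right (u * P) (v * Q)]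
    exact J.sub_mem hxJ (J.mul_mem_left v hQ)
  rw [add_comm, mul_comm u]
  exact Submodule.add_mem_sup (Ideal.mul_mem_left _ v (Ideal.mem_span_singleton_self Q))
    (Ideal.mul_mem_mul (Ideal.mem_span_singleton_self P) hu)

theorem span_pair_mul_eq_inf {P P' Q : α}
    (hP : ∀ f, P * f ∈ Ideal.span {P', Q} → f ∈ Ideal.span {P', Q}) :
    Ideal.span {P * P', Q} = Ideal.span {P, Q} ⊓ Ideal.span {P', Q} := by
  rw [← span_singleton_sup_mul_eq_inf (Ideal.subset_span (by simp)) hP, Ideal.span_insert P',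
    Ideal.mul_sup, Ideal.span_singleton_mul_span_singleton,
    Ideal.span_singleton_mul_span_singleton, ← sup_assoc,
    sup_eq_left.2 (le_sup_of_le_left (Ideal.span_singleton_le_span_singleton.2 (dvd_mul_left Q P))),
    sup_comm, Ideal.span_insert]

theorem span_prod_pair_eq_iInf {ι : Type*} (s : Finset ι) (g : ι → α) (Q : α)
    (J : ι → Ideal α) (hJ : ∀ i ∈ s, Ideal.span {g i, Q} = J i)
    (hg : ∀ i ∈ s, ∀ i' ∈ s, i ≠ i' → ∀ f, g i * f ∈ J i' → f ∈ J i') :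
    Ideal.span {∏ i ∈ s, g i, Q} = ⨅ i ∈ s, J i := by
  classical
  induction s using Finset.induction_on with
  | empty => simp [Ideal.span_insert]
  | insert a s ha ih =>
    have ih' := ih (fun i hi => hJ i (s.mem_insert_of_mem hi))
      (fun i hi i' hi' => hg i (s.mem_insert_of_mem hi) i' (s.mem_insert_of_mem hi'))
    rw [Finset.prod_insert ha, Finset.iInf_insert, ← ih', ← hJ a (s.mem_insert_self a)]
    refine span_pair_mul_eq_inf fun f hf => ?_
    rw [ih'] at hf ⊢
    simp only [Ideal.mem_iInf] at hf ⊢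
    exact fun i hi => hg a (s.mem_insert_self a) i (s.mem_insert_of_mem hi)
      (fun h => ha (h ▸ hi)) f (hf i hi)

end Splitting

def DistinctPointsOn (A : ℕ → ℂ × ℂ) (s : Finset ℕ) : Prop :=
  (∀ i ∈ s, A i ≠ 0) ∧ ∀ i ∈ s, ∀ i' ∈ s, i ≠ i' → cross (A i) (A i') ≠ 0

theorem DistinctPointsOn.mono {A : ℕ → ℂ × ℂ} {s t : Finset ℕ} (h : DistinctPointsOn A t)
    (hst : s ⊆ t) : DistinctPointsOn A s :=
  ⟨fun i hi => h.1 i (hst hi), fun i hi i' hi' => h.2 i (hst hi) i' (hst hi')⟩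

theorem span_Hf_prod_Vf {a : ℂ × ℂ} (ha : a ≠ 0) {B : ℕ → ℂ × ℂ} {U : Finset ℕ}
    (hB : DistinctPointsOn B U) :
    Ideal.span {Hf a, ∏ j ∈ U, Vf (B j)} = ⨅ j ∈ U, Ipt (a, B j) := by
  rw [Set.pair_comm]
  refine span_prod_pair_eq_iInf U _ _ _ (fun j _ => by rw [Ipt, Set.pair_comm]) ?_
  intro j hj j' hj' hne f hf
  exact ((Ipt_isPrime ha (hB.1 j' hj')).mem_or_mem hf).resolve_left
    (Vf_notMem_Ipt a (hB.2 j' hj' j hj hne.symm))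

theorem span_prod_Hf_prod_Vf {A B : ℕ → ℂ × ℂ} {T U : Finset ℕ} (hA : DistinctPointsOn A T)
    (hB : DistinctPointsOn B U) :
    Ideal.span {∏ i ∈ T, Hf (A i), ∏ j ∈ U, Vf (B j)} = ⨅ i ∈ T, ⨅ j ∈ U, Ipt (A i, B j) := by
  refine span_prod_pair_eq_iInf T _ _ _ (fun i hi => span_Hf_prod_Vf (hA.1 i hi) hB) ?_
  intro i hi i' hi' hne f hf
  simp only [Ideal.mem_iInf] at hf ⊢
  exact fun j hj => ((Ipt_isPrime (hA.1 i' hi') (hB.1 j hj)).mem_or_mem (hf j hj)).resolve_left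
    (Hf_notMem_Ipt _ (hA.2 i' hi' i hi hne.symm))

section Ferrers

variable {A B : ℕ → ℂ × ℂ} {T σ : ℕ → ℕ}

def ferrersGen (A B : ℕ → ℂ × ℂ) (T σ : ℕ → ℕ) (l : ℕ) : R :=
  (∏ i ∈ Finset.Ioc (T 0) (T l), Hf (A i)) * ∏ j ∈ Finset.Icc 1 (σ l), Vf (B j)

def ferrersIdeal (A B : ℕ → ℂ × ℂ) (T σ : ℕ → ℕ) (n : ℕ) : Ideal R :=
  ⨅ l < n, ⨅ i ∈ Finset.Ioc (T l) (T (l + 1)), ⨅ j ∈ Finset.Icc 1 (σ l), Ipt (A i, B j)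

theorem ferrersGen_zero : ferrersGen A B T σ 0 = ∏ j ∈ Finset.Icc 1 (σ 0), Vf (B j) := by
  rw [ferrersGen, Finset.Ioc_self, Finset.prod_empty, one_mul]

theorem ferrersGen_succ {l : ℕ} (h01 : T 0 ≤ T 1) (h1 : T 1 ≤ T (l + 1)) :
    ferrersGen A B T σ (l + 1) = (∏ i ∈ Finset.Ioc (T 0) (T 1), Hf (A i)) *
      ferrersGen A B (fun l => T (l + 1)) (fun l => σ (l + 1)) l := by
  rw [ferrersGen, ferrersGen, ← Finset.prod_Ioc_consecutive _ h01 h1, mul_assoc]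

theorem ferrersIdeal_succ (n : ℕ) :
    ferrersIdeal A B T σ (n + 1) =
      (⨅ i ∈ Finset.Ioc (T 0) (T 1), ⨅ j ∈ Finset.Icc 1 (σ 0), Ipt (A i, B j)) ⊓
        ferrersIdeal A B (fun l => T (l + 1)) (fun l => σ (l + 1)) n :=
  Nat.iInf_lt_succ' _ n

theorem mem_ferrersIdeal_of_prod_Hf_mul_mem {n c : ℕ} (hT : MonotoneOn T (Set.Iic n))
    (hσ : AntitoneOn σ (Set.Iic n)) (hc : c ≤ T 0) (hA : DistinctPointsOn A (Finset.Ioc c (T n)))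
    (hB : DistinctPointsOn B (Finset.Icc 1 (σ 0))) {f : R}
    (h : (∏ i ∈ Finset.Ioc c (T 0), Hf (A i)) * f ∈ ferrersIdeal A B T σ n) :
    f ∈ ferrersIdeal A B T σ n := by
  simp only [ferrersIdeal, Ideal.mem_iInf] at h ⊢
  intro l hl i hi j hj
  have hT0 : T 0 ≤ T l := hT (by simp) (Set.mem_Iic.2 hl.le) (Nat.zero_le l)
  have hTn : T (l + 1) ≤ T n := hT (Set.mem_Iic.2 hl) (by simp) hl
  have hσ0 : σ l ≤ σ 0 := hσ (by simp) (Set.mem_Iic.2 hl.le) (Nat.zero_le l)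
  refine (Ipt_isPrime (hA.1 i ?_) (hB.1 j ?_)).mem_of_prod_mul_mem
    (fun i₀ hi₀ => Hf_notMem_Ipt _ (hA.2 i ?_ i₀ ?_ ?_)) (h l hl i hi j hj)
  all_goals simp only [Finset.mem_Ioc, Finset.mem_Icc] at *; omega

theorem iSup_span_ferrersGen {n : ℕ} (hT : MonotoneOn T (Set.Iic n))
    (hσ : AntitoneOn σ (Set.Iic n)) (hσn : σ n = 0)
    (hA : DistinctPointsOn A (Finset.Ioc (T 0) (T n)))
    (hB : DistinctPointsOn B (Finset.Icc 1 (σ 0))) :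
    ⨆ l ≤ n, Ideal.span {ferrersGen A B T σ l} = ferrersIdeal A B T σ n := by
  induction n generalizing T σ with
  | zero => simp [ferrersGen, ferrersIdeal, hσn]
  | succ n ih =>
    have mono {a b : ℕ} (hab : a ≤ b) (hb : b ≤ n + 1) : T a ≤ T b :=
      hT (Set.mem_Iic.2 (hab.trans hb)) (Set.mem_Iic.2 hb) hab
    have hT' : MonotoneOn (fun l => T (l + 1)) (Set.Iic n) := fun a ha b hb hab =>
      hT (by simpa using ha) (by simpa using hb) (by omega)
    have hσ' : AntitoneOn (fun l => σ (l + 1)) (Set.Iic n) := fun a ha b hb hab =>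
      hσ (by simpa using ha) (by simpa using hb) (by omega)
    have hT01 : T 0 ≤ T 1 := mono zero_le_one (by omega)
    have hσ1 : σ 1 ≤ σ 0 := hσ (by simp) (by simp) zero_le_one
    have hA' := hA.mono (Finset.Ioc_subset_Ioc_left hT01)
    have hB' := hB.mono (Finset.Icc_subset_Icc_right hσ1)
    set J := ferrersIdeal A B (fun l => T (l + 1)) (fun l => σ (l + 1)) n
    have hJ : ⨆ l ≤ n, Ideal.span {ferrersGen A B (fun l => T (l + 1)) (fun l => σ (l + 1)) l} =
        J := ih hT' hσ' hσn hA' hB'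
    have hQ : ∏ j ∈ Finset.Icc 1 (σ 0), Vf (B j) ∈ J := by
      refine hJ ▸ Submodule.mem_iSup_of_mem 0 (Submodule.mem_iSup_of_mem (Nat.zero_le n) ?_)
      rw [ferrersGen_zero, Ideal.mem_span_singleton]
      exact Finset.prod_dvd_prod_of_subset _ _ _ (Finset.Icc_subset_Icc_right hσ1)
    have hP (f : R) (hf : (∏ i ∈ Finset.Ioc (T 0) (T 1), Hf (A i)) * f ∈ J) : f ∈ J :=
      mem_ferrersIdeal_of_prod_Hf_mul_mem hT' hσ' hT01 hA hB' hf
    have hsucc : ⨆ l ≤ n, Ideal.span {ferrersGen A B T σ (l + 1)} =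
        Ideal.span {∏ i ∈ Finset.Ioc (T 0) (T 1), Hf (A i)} * J := by
      simp only [← hJ, Ideal.mul_iSup, Ideal.span_singleton_mul_span_singleton]
      exact iSup_congr fun l => iSup_congr fun hl => by
        rw [ferrersGen_succ hT01 (mono (by omega) (by omega))]
    rw [Nat.iSup_le_succ', hsucc, ferrersGen_zero,
      span_singleton_sup_mul_eq_inf hQ hP,
      span_prod_Hf_prod_Vf (hA.mono (Finset.Ioc_subset_Ioc_right (mono (by omega) le_rfl))) hB,
      ferrersIdeal_succ]

end Ferrers

theorem iInf_Ioc_eq_iInf_iInf_Ioc {α : Type*} [CompleteLattice α] {u : ℕ → ℕ} {n : ℕ}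
    (hu : MonotoneOn u (Set.Iic n)) (F : ℕ → α) :
    ⨅ i ∈ Finset.Ioc (u 0) (u n), F i = ⨅ l < n, ⨅ i ∈ Finset.Ioc (u l) (u (l + 1)), F i := by
  induction n with
  | zero => simp
  | succ n ih =>
    have mono {a b : ℕ} (hab : a ≤ b) (hb : b ≤ n + 1) : u a ≤ u b :=
      hu (Set.mem_Iic.2 (hab.trans hb)) (Set.mem_Iic.2 hb) hab
    rw [Nat.iInf_lt_succ, ← ih (hu.mono (Set.Iic_subset_Iic.2 n.le_succ)),
      ← Finset.Ioc_union_Ioc_eq_Ioc (mono (Nat.zero_le n) n.le_succ) (mono n.le_succ le_rfl),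
      Finset.iInf_union]

theorem Set.image_Iic_succ_eq_union {β : Type*} (f : ℕ → β) (m : ℕ) :
    f '' Set.Iic (m + 1) = {f 0, f (m + 1)} ∪ f '' Set.Icc 1 m := by
  have hIic : Set.Iic (m + 1) = insert 0 (insert (m + 1) (Set.Icc 1 m)) := by
    ext l
    simp only [Set.mem_Iic, Set.mem_insert_iff, Set.mem_Icc]
    omega
  rw [hIic, Set.image_insert_eq, Set.image_insert_eq, Set.insert_union, Set.singleton_union]

theorem Staircase.monotoneOn_t (S : Staircase) : MonotoneOn S.t (Set.Iic S.r) :=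
  monotoneOn_of_le_add_one Set.ordConnected_Iic fun l _ _ hl => (S.ht l (by simpa using hl)).le

theorem Staircase.monotoneOn_s (S : Staircase) : MonotoneOn S.s (Set.Iic S.r) :=
  monotoneOn_of_le_add_one Set.ordConnected_Iic fun l _ _ hl => (S.hs l (by simpa using hl)).le

theorem Staircase.monotoneOn_t_comp (S : Staircase) {k : ℕ → ℕ} {n : ℕ} (hkn : k n = S.r)
    (hk : MonotoneOn k (Set.Iic n)) : MonotoneOn (fun l => S.t (k l)) (Set.Iic n) :=
  S.monotoneOn_t.comp hk fun l hl => hkn ▸ hk hl (by simp) hl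

theorem Staircase.iSup_span_stairGen (S : Staircase) {k : ℕ → ℕ} {n : ℕ}
    (hk0 : k 0 = 0) (hkn : k n = S.r) (hk : MonotoneOn k (Set.Iic n)) :
    ⨆ l ≤ n, Ideal.span {stairGen S (k l)} =
      ferrersIdeal S.A S.B (fun l => S.t (k l)) (fun l => S.s (S.r - k l)) n := by
  have hσ : AntitoneOn (fun l => S.s (S.r - k l)) (Set.Iic n) := fun a ha b hb hab =>
    S.monotoneOn_s (by simp) (by simp) (Nat.sub_le_sub_left (hk ha hb hab) _)
  have hA : DistinctPointsOn S.A (Finset.Ioc (S.t (k 0)) (S.t (k n))) := by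
    rw [hk0, S.ht0, hkn, ← Finset.Icc_add_one_left_eq_Ioc, zero_add]
    exact ⟨S.hA0, S.hAd⟩
  have hB : DistinctPointsOn S.B (Finset.Icc 1 (S.s (S.r - k 0))) := by
    rw [hk0, Nat.sub_zero]
    exact ⟨S.hB0, S.hBd⟩
  rw [← iSup_span_ferrersGen (S.monotoneOn_t_comp hkn hk) hσ (by simp [hkn, S.hs0]) hA hB]
  refine iSup_congr fun l => iSup_congr fun _ => ?_
  rw [ferrersGen, hk0, S.ht0, stairGen, ← Finset.Icc_add_one_left_eq_Ioc, zero_add]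

/-- Theorem 3.5 (in staircase form): for any subset S = {f_{k₁},…,f_{k_m}} of the
middle staircase generators (encoded by k with k 0 = 0 < k 1 < ⋯ < k m < k (m+1) = r),
the ideal generated by A = {f₀, f_r} ∪ S is the defining ideal of the ACM set of points
{Aᵢ×Bⱼ : 1 ≤ i ≤ t_r, 1 ≤ j ≤ α′ᵢ} with α′ᵢ = s_{r - k_l} for t_{k_l} < i ≤ t_{k_{l+1}}. -/
theorem statement8 (S : Staircase) (m : ℕ) (k : ℕ → ℕ)
    (hk0 : k 0 = 0) (hkm : k (m + 1) = S.r)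
    (hkmono : ∀ l, l ≤ m → k l < k (l + 1))
    (α' : ℕ → ℕ)
    (hα' : ∀ l, l ≤ m → ∀ i, S.t (k l) < i → i ≤ S.t (k (l + 1)) →
      α' i = S.s (S.r - k l)) :
    Ideal.span ({stairGen S 0, stairGen S S.r} ∪
        (fun l => stairGen S (k l)) '' Set.Icc 1 m) =
      ⨅ i ∈ Finset.Icc 1 (S.t S.r), ⨅ j ∈ Finset.Icc 1 (α' i), Ipt (S.A i, S.B j) := by
  have hk : MonotoneOn k (Set.Iic (m + 1)) :=
    monotoneOn_of_le_add_one Set.ordConnected_Iic fun l _ _ hl =>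
      (hkmono l (by simpa using hl)).le
  have hgens := Set.image_Iic_succ_eq_union (fun l => stairGen S (k l)) m
  have hblocks := iInf_Ioc_eq_iInf_iInf_Ioc (S.monotoneOn_t_comp hkm hk) fun i =>
    ⨅ j ∈ Finset.Icc 1 (α' i), Ipt (S.A i, S.B j)
  simp only [hk0, hkm] at hgens
  rw [hk0, S.ht0, hkm, ← Finset.Icc_add_one_left_eq_Ioc, zero_add] at hblocks
  rw [← hgens, Set.image_eq_iUnion]
  simp only [Ideal.span_iUnion, Set.mem_Iic]
  rw [S.iSup_span_stairGen hk0 hkm hk, ferrersIdeal, hblocks]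
  refine biInf_congr fun l hl => biInf_congr fun i hi => ?_
  rw [Finset.mem_Ioc] at hi
  rw [hα' l (by omega) i hi.1 hi.2]
end
end
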